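/- arXiv:1103.4288 — 5 statements merged into one kernel-verified Lean document; each statement's English description precedes it below -/
import Mathlib

section
/- Worpitzky's identity: for all natural numbers x and d ≥ 1, x^d = ∑_{k=0}^{d-1} A(d,k) · C(x+k, d), where A(d,k) is the Eulerian number. -/
/-- Eulerian numbers: `eulerian d s` is the number of permutations of
`{1,...,d}` with exactly `s` descents. -/
def eulerian : ℕ → ℕ → ℕ
  | 0, 0 => 1
  | 0, _ + 1 => 0
  | d + 1, 0 => eulerian d 0
  | d + 1, s + 1 => (s + 2) * eulerian d (s + 1) + (d + 1 - (s + 1)) * eulerian d s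

lemma eulerian_zero_of_le (d k : ℕ) (h : d ≤ k) (h2 : k ≠ 0) : eulerian d k = 0 := by
  induction d generalizing k with
  | zero =>
    obtain ⟨k, rfl⟩ := Nat.exists_eq_succ_of_ne_zero h2
    rfl
  | succ d ih =>
    obtain ⟨s, rfl⟩ := Nat.exists_eq_succ_of_ne_zero h2
    have hs : d ≤ s := Nat.succ_le_succ_iff.mp h
    show (s + 2) * eulerian d (s + 1) + (d + 1 - (s + 1)) * eulerian d s = 0
    rw [ih (s + 1) (le_trans hs (Nat.le_succ s)) (Nat.succ_ne_zero s)]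
    have : d + 1 - (s + 1) = 0 := by omega
    simp [this]

lemma worpitzky_key (x k d : ℕ) (hk : k ≤ d) :
    x * Nat.choose (x + k) d =
      (k + 1) * Nat.choose (x + k) (d + 1) + (d - k) * Nat.choose (x + k + 1) (d + 1) := by
  rcases lt_or_ge (x + k) d with h | h
  · rw [Nat.choose_eq_zero_of_lt h, Nat.choose_eq_zero_of_lt (by omega),
      Nat.choose_eq_zero_of_lt (by omega)]
    ring
  · obtain ⟨a, rfl⟩ : ∃ a, d = k + a := ⟨d - k, by omega⟩
    obtain ⟨b, rfl⟩ : ∃ b, x = a + b := ⟨x - a, by omega⟩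
    have h1 : Nat.choose (a + b + k) (k + a + 1) * (k + a + 1)
        = Nat.choose (a + b + k) (k + a) * (a + b + k - (k + a)) :=
      Nat.choose_succ_right_eq _ _
    have h2 : a + b + k - (k + a) = b := by omega
    rw [h2] at h1
    have h3 : a + b + k + 1 = (a + b + k) + 1 := rfl
    rw [h3, Nat.choose_succ_succ]
    have : k + a - k = a := by omega
    rw [this]
    zify at h1 ⊢
    linear_combination -h1

/-- Worpitzky's identity. -/
theorem stmt1 (x d : ℕ) (hd : 1 ≤ d) :
    x ^ d = ∑ k ∈ Finset.range d, eulerian d k * Nat.choose (x + k) d := by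
  induction d, hd using Nat.le_induction with
  | base => simp [eulerian]
  | succ d hd ih =>
    calc x ^ (d + 1) = x * x ^ d := by ring
      _ = ∑ k ∈ Finset.range d, eulerian d k * (x * Nat.choose (x + k) d) := by
          rw [ih, Finset.mul_sum]
          exact Finset.sum_congr rfl fun k _ => by ring
      _ = ∑ k ∈ Finset.range d, ((k + 1) * eulerian d k * Nat.choose (x + k) (d + 1)
            + (d - k) * eulerian d k * Nat.choose (x + k + 1) (d + 1)) := by
          refine Finset.sum_congr rfl fun k hk => ?_
          rw [worpitzky_key x k d (le_of_lt (Finset.mem_range.mp hk))]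
          ring
      _ = (∑ k ∈ Finset.range d, (k + 1) * eulerian d k * Nat.choose (x + k) (d + 1))
            + ∑ s ∈ Finset.range d, (d - s) * eulerian d s * Nat.choose (x + s + 1) (d + 1) := by
          rw [Finset.sum_add_distrib]
      _ = (∑ k ∈ Finset.range (d + 1), (k + 1) * eulerian d k * Nat.choose (x + k) (d + 1))
            + ∑ s ∈ Finset.range d, (d - s) * eulerian d s * Nat.choose (x + s + 1) (d + 1) := by
          rw [Finset.sum_range_succ, eulerian_zero_of_le d d le_rfl (by omega)]
          ring
      _ = ((∑ s ∈ Finset.range d, (s + 2) * eulerian d (s + 1) * Nat.choose (x + (s + 1)) (d + 1))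
            + 1 * eulerian d 0 * Nat.choose (x + 0) (d + 1))
            + ∑ s ∈ Finset.range d, (d - s) * eulerian d s * Nat.choose (x + s + 1) (d + 1) := by
          rw [Finset.sum_range_succ']
      _ = (∑ s ∈ Finset.range d, eulerian (d + 1) (s + 1) * Nat.choose (x + (s + 1)) (d + 1))
            + eulerian (d + 1) 0 * Nat.choose (x + 0) (d + 1) := by
          rw [add_right_comm, ← Finset.sum_add_distrib]
          congr 1
          · refine Finset.sum_congr rfl fun s _ => ?_
            show _ = ((s + 2) * eulerian d (s + 1) + (d + 1 - (s + 1)) * eulerian d s) * _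
            have : d + 1 - (s + 1) = d - s := by omega
            rw [this]
            have : x + (s + 1) = x + s + 1 := by ring
            rw [this]
            ring
          · show 1 * eulerian d 0 * _ = eulerian d 0 * _
            ring
      _ = ∑ k ∈ Finset.range (d + 1), eulerian (d + 1) k * Nat.choose (x + k) (d + 1) := by
          rw [Finset.sum_range_succ']
end

section
/- For all natural numbers n, d ≥ 1 and t ≥ 1, the t-fold iterated sum of d-th powers satisfies: applying the summation operator S(f)(n) = ∑_{m=1}^n f(m) t times to f(j) = j^d gives ∑_{s=0}^{d-1} A(d,s) · C(n-s+d+t-1, d+t). -/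
/-- The summation operator `S f n = ∑_{m=1}^n f m`. -/
def sumOp (f : ℕ → ℕ) : ℕ → ℕ := fun n => ∑ m ∈ Finset.Icc 1 n, f m

lemma eulerian_zero_aux : ∀ d s, d ≤ s → eulerian (d+1) (s+1) = 0 := by
  intro d
  induction d with
  | zero =>
    intro s _
    cases s with
    | zero => simp [eulerian]
    | succ s => simp [eulerian]
  | succ d ih =>
    intro s hs
    obtain ⟨s, rfl⟩ : ∃ s', s = s' + 1 := ⟨s - 1, by omega⟩
    have h1 := ih (s+1) (by omega)
    have h2 := ih s (by omega)
    have hdef : eulerian (d+2) (s+2) = (s+3) * eulerian (d+1) (s+2) + ((d+2)-(s+2)) * eulerian (d+1) (s+1) := rfl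
    rw [hdef, show s+2 = s+1+1 from rfl, h1, h2]
    simp

lemma key (j s e : ℕ) (hs : s ≤ e) :
    j * Nat.choose (j + e - s) (e+1) =
      (s+1) * Nat.choose (j + e + 1 - s) (e+2) + (e + 1 - s) * Nat.choose (j + e - s) (e+2) := by
  rcases le_or_gt j s with hj | hj
  · rw [Nat.choose_eq_zero_of_lt (by omega), Nat.choose_eq_zero_of_lt (by omega),
      Nat.choose_eq_zero_of_lt (by omega)]
    simp
  · obtain ⟨a, rfl⟩ : ∃ a, j = s + 1 + a := ⟨j - s - 1, by omega⟩
    obtain ⟨b, rfl⟩ : ∃ b, e = s + b := ⟨e - s, by omega⟩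
    have e1 : s + 1 + a + (s + b) - s = s + a + b + 1 := by omega
    have e2 : s + 1 + a + (s + b) + 1 - s = s + a + b + 2 := by omega
    have e3 : s + b + 1 - s = b + 1 := by omega
    rw [e1, e2, e3]
    set m := s + a + b + 1 with hm
    set k := s + b + 1 with hk
    have h1 : (m+1) * Nat.choose m k = Nat.choose (m+1) (k+1) * (k+1) :=
      Nat.add_one_mul_choose_eq m k
    have h2 : Nat.choose m (k+1) * (k+1) = Nat.choose m k * a := by
      have := Nat.choose_succ_right_eq m k
      rwa [show m - k = a from by omega] at this
    apply Nat.eq_of_mul_eq_mul_right (show 0 < k + 1 from by omega)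
    have hm2 : m + 1 = s + a + b + 2 := by omega
    calc (s + 1 + a) * Nat.choose m k * (k+1)
        = (s+1) * ((m+1) * Nat.choose m k) + (b+1) * (Nat.choose m k * a) := by
          rw [hm, hk]; ring
      _ = (s+1) * (Nat.choose (m+1) (k+1) * (k+1)) + (b+1) * (Nat.choose m (k+1) * (k+1)) := by
          rw [h1, h2]
      _ = ((s+1) * Nat.choose (s+a+b+2) (k+1) + (b+1) * Nat.choose m (k+1)) * (k+1) := by
          rw [hm2]; ring

lemma bridge (m s e : ℕ) :
    Nat.choose (m + e - s) (e+1) = Nat.choose (m - s + e) (e+1) := by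
  rcases le_total s m with h | h
  · congr 1; omega
  · rw [Nat.choose_eq_zero_of_lt (by omega), Nat.choose_eq_zero_of_lt (by omega)]

lemma hockey (e s : ℕ) : ∀ n,
    ∑ m ∈ Finset.Icc 1 n, Nat.choose (m - s + e) (e+1) = Nat.choose (n - s + e + 1) (e+2) := by
  intro n
  induction n with
  | zero => simp [Nat.choose_eq_zero_of_lt (show e+1 < e+2 from by omega)]
  | succ n ih =>
    rw [Finset.sum_Icc_succ_top (by omega), ih]
    rcases le_or_gt (n+1) s with h | h
    · rw [show n + 1 - s = 0 from by omega, show n - s = 0 from by omega]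
      simp only [Nat.zero_add]
      rw [Nat.choose_eq_zero_of_lt (Nat.lt_succ_self (e+1)),
        Nat.choose_eq_zero_of_lt (Nat.lt_succ_self e)]
    · rw [show n + 1 - s + e = (n - s + e) + 1 from by omega]
      rw [Nat.choose_succ_succ (n - s + e + 1) (e+1)]
      simp only [Nat.succ_eq_add_one, show e + 1 + 1 = e + 2 from rfl]
      omega

lemma worpitzky : ∀ e j, j ^ (e+1) =
    ∑ s ∈ Finset.range (e+1), eulerian (e+1) s * Nat.choose (j + e - s) (e+1) := by
  intro e
  induction e with
  | zero =>
    intro j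
    simp [eulerian]
  | succ e ih =>
    intro j
    show j ^ (e+2) = ∑ s ∈ Finset.range (e+2), eulerian (e+2) s * Nat.choose (j + e + 1 - s) (e+2)
    have hz : eulerian (e+1) (e+1) = 0 := eulerian_zero_aux e e le_rfl
    have hL : j ^ (e+2) =
        (∑ s ∈ Finset.range (e+1), eulerian (e+1) s * ((s+1) * Nat.choose (j+e+1-s) (e+2)))
        + ∑ s ∈ Finset.range (e+1), eulerian (e+1) s * ((e+1-s) * Nat.choose (j+e-s) (e+2)) := by
      have hp : j ^ (e+2) = j * j ^ (e+1) := by ring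
      rw [hp, ih, Finset.mul_sum, ← Finset.sum_add_distrib]
      refine Finset.sum_congr rfl fun s hs => ?_
      have hs' : s ≤ e := by
        have := Finset.mem_range.mp hs; omega
      calc j * (eulerian (e+1) s * Nat.choose (j + e - s) (e+1))
          = eulerian (e+1) s * (j * Nat.choose (j+e-s) (e+1)) := by ring
        _ = eulerian (e+1) s * ((s+1) * Nat.choose (j + e + 1 - s) (e+2)
              + (e + 1 - s) * Nat.choose (j + e - s) (e+2)) := by rw [key j s e hs']
        _ = _ := by ring
    have hS1 : (∑ s ∈ Finset.range (e+1), eulerian (e+1) s * ((s+1) * Nat.choose (j+e+1-s) (e+2)))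
        = (∑ s ∈ Finset.range (e+1), (s+2) * eulerian (e+1) (s+1) * Nat.choose (j+e-s) (e+2))
          + eulerian (e+1) 0 * Nat.choose (j+e+1) (e+2) := by
      rw [Finset.sum_range_succ' (fun s => eulerian (e+1) s * ((s+1) * Nat.choose (j+e+1-s) (e+2))) e]
      rw [Finset.sum_range_succ (fun s => (s+2) * eulerian (e+1) (s+1) * Nat.choose (j+e-s) (e+2)) e]
      rw [hz]
      have hcong : ∀ s ∈ Finset.range e,
          eulerian (e+1) (s+1) * ((s+1+1) * Nat.choose (j+e+1-(s+1)) (e+2))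
          = (s+2) * eulerian (e+1) (s+1) * Nat.choose (j+e-s) (e+2) := by
        intro s hs
        rw [show j+e+1-(s+1) = j+e-s from by omega]
        ring
      rw [Finset.sum_congr rfl hcong]
      simp only [Nat.sub_zero, Nat.mul_zero, Nat.zero_mul, Nat.add_zero, Nat.zero_add, Nat.one_mul]
    have hR : (∑ r ∈ Finset.range (e+2), eulerian (e+2) r * Nat.choose (j + e + 1 - r) (e+2))
        = ((∑ s ∈ Finset.range (e+1), (s+2) * eulerian (e+1) (s+1) * Nat.choose (j+e-s) (e+2))
            + eulerian (e+1) 0 * Nat.choose (j+e+1) (e+2))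
          + ∑ s ∈ Finset.range (e+1), eulerian (e+1) s * ((e+1-s) * Nat.choose (j+e-s) (e+2)) := by
      rw [Finset.sum_range_succ' (fun r => eulerian (e+2) r * Nat.choose (j + e + 1 - r) (e+2)) (e+1)]
      have hcong : ∀ s ∈ Finset.range (e+1),
          eulerian (e+2) (s+1) * Nat.choose (j+e+1-(s+1)) (e+2)
          = (s+2) * eulerian (e+1) (s+1) * Nat.choose (j+e-s) (e+2)
            + eulerian (e+1) s * ((e+1-s) * Nat.choose (j+e-s) (e+2)) := by
        intro s hs
        have hdef : eulerian (e+2) (s+1) = (s+2) * eulerian (e+1) (s+1) + ((e+2)-(s+1)) * eulerian (e+1) s := rfl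
        rw [hdef, show j+e+1-(s+1) = j+e-s from by omega, show (e+2)-(s+1) = e+1-s from by omega]
        ring
      rw [Finset.sum_congr rfl hcong, Finset.sum_add_distrib]
      have h0 : eulerian (e+2) 0 = eulerian (e+1) 0 := rfl
      rw [h0]
      simp only [Nat.sub_zero]
      ring
    rw [hL, hS1, hR]

lemma main_aux (d : ℕ) (hd : 1 ≤ d) : ∀ t n, (sumOp^[t+1] (fun j => j ^ d)) n =
    ∑ s ∈ Finset.range d, eulerian d s * Nat.choose (n - s + (d + t)) (d + t + 1) := by
  intro t
  induction t with
  | zero =>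
    intro n
    obtain ⟨e, rfl⟩ : ∃ e, d = e + 1 := ⟨d - 1, by omega⟩
    rw [Function.iterate_one]
    show ∑ m ∈ Finset.Icc 1 n, m ^ (e+1) = _
    calc ∑ m ∈ Finset.Icc 1 n, m ^ (e+1)
        = ∑ m ∈ Finset.Icc 1 n, ∑ s ∈ Finset.range (e+1),
            eulerian (e+1) s * Nat.choose (m + e - s) (e+1) :=
          Finset.sum_congr rfl fun m _ => worpitzky e m
      _ = ∑ s ∈ Finset.range (e+1), ∑ m ∈ Finset.Icc 1 n,
            eulerian (e+1) s * Nat.choose (m + e - s) (e+1) := Finset.sum_comm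
      _ = ∑ s ∈ Finset.range (e+1), eulerian (e+1) s *
            ∑ m ∈ Finset.Icc 1 n, Nat.choose (m - s + e) (e+1) := by
          refine Finset.sum_congr rfl fun s _ => ?_
          rw [Finset.mul_sum]
          exact Finset.sum_congr rfl fun m _ => by rw [bridge]
      _ = ∑ s ∈ Finset.range (e+1), eulerian (e+1) s * Nat.choose (n - s + e + 1) (e+2) := by
          refine Finset.sum_congr rfl fun s _ => ?_
          rw [hockey e s n]
  | succ t ih =>
    intro n
    rw [Function.iterate_succ_apply' sumOp (t+1) (fun j => j ^ d)]
    show ∑ m ∈ Finset.Icc 1 n, (sumOp^[t+1] (fun j => j ^ d)) m = _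
    calc ∑ m ∈ Finset.Icc 1 n, (sumOp^[t+1] (fun j => j ^ d)) m
        = ∑ m ∈ Finset.Icc 1 n, ∑ s ∈ Finset.range d,
            eulerian d s * Nat.choose (m - s + (d + t)) (d + t + 1) :=
          Finset.sum_congr rfl fun m _ => ih m
      _ = ∑ s ∈ Finset.range d, ∑ m ∈ Finset.Icc 1 n,
            eulerian d s * Nat.choose (m - s + (d + t)) (d + t + 1) := Finset.sum_comm
      _ = ∑ s ∈ Finset.range d, eulerian d s * Nat.choose (n - s + (d + t) + 1) (d + t + 2) := by
          refine Finset.sum_congr rfl fun s _ => ?_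
          rw [← Finset.mul_sum, hockey (d+t) s n]

theorem stmt4 (n d t : ℕ) (hd : 1 ≤ d) (ht : 1 ≤ t) :
    (sumOp^[t] (fun j => j ^ d)) n =
      ∑ s ∈ Finset.range d, eulerian d s * Nat.choose (n - s + d + t - 1) (d + t) := by
  obtain ⟨t, rfl⟩ : ∃ t', t = t' + 1 := ⟨t - 1, by omega⟩
  rw [main_aux d hd t n]
  refine Finset.sum_congr rfl fun s _ => ?_
  congr 1
  congr 1 <;> omega
end

section
/- For all natural numbers n and d ≥ 1, n(n+1) divides (d+1)! · ∑_{j=1}^{n} j^d. -/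
open Finset

private lemma key_id (n d : ℕ) :
    ∑ k ∈ range (d + 1), ((d+1).choose k : ℤ) * ∑ j ∈ range n, ((j:ℤ)+1)^k
      = ((n:ℤ)+1)^(d+1) - 1 := by
  have inner : ∀ x : ℤ, ∑ k ∈ range (d + 1), ((d+1).choose k : ℤ) * x^k
      = (x+1)^(d+1) - x^(d+1) := by
    intro x
    have h := add_pow x 1 (d+1)
    simp only [one_pow, mul_one] at h
    rw [Finset.sum_range_succ] at h
    simp only [Nat.choose_self, Nat.cast_one, mul_one] at h
    have h2 : ∑ k ∈ range (d + 1), ((d+1).choose k : ℤ) * x^k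
        = ∑ k ∈ range (d + 1), x^k * ((d+1).choose k : ℤ) := by
      apply Finset.sum_congr rfl; intros; ring
    rw [h2]
    linarith [h]
  calc ∑ k ∈ range (d + 1), ((d+1).choose k : ℤ) * ∑ j ∈ range n, ((j:ℤ)+1)^k
      = ∑ j ∈ range n, ∑ k ∈ range (d + 1), ((d+1).choose k : ℤ) * ((j:ℤ)+1)^k := by
        rw [Finset.sum_comm]
        exact Finset.sum_congr rfl fun k _ => Finset.mul_sum _ _ _
    _ = ∑ j ∈ range n, ((((j:ℤ)+1)+1)^(d+1) - ((j:ℤ)+1)^(d+1)) :=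
        Finset.sum_congr rfl fun j _ => inner _
    _ = ((n:ℤ)+1)^(d+1) - 1 := by
        have h3 := Finset.sum_range_sub (fun i => ((i:ℤ)+1)^(d+1)) n
        simp only [Nat.cast_zero, zero_add, one_pow] at h3
        rw [← h3]
        apply Finset.sum_congr rfl
        intros; push_cast; ring

private lemma main_int (n : ℕ) : ∀ d, 1 ≤ d →
    ((n:ℤ) * ((n:ℤ)+1)) ∣ (Nat.factorial (d+1) : ℤ) * ∑ j ∈ range n, ((j:ℤ)+1)^d := by
  intro d
  induction d using Nat.strong_induction_on with
  | _ d ih =>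
    intro hd
    obtain ⟨e, rfl⟩ : ∃ e, d = e + 1 := ⟨d - 1, by omega⟩
    have hid := key_id n (e+1)
    rw [Finset.sum_range_succ, Finset.sum_range_succ'] at hid
    simp only [Nat.choose_succ_self_right, Nat.choose_zero_right, Nat.cast_one, one_mul,
      Nat.cast_add] at hid
    have hT0 : ∑ j ∈ range n, ((j:ℤ)+1)^0 = (n : ℤ) := by simp
    rw [hT0] at hid
    have key : ((e+1+1).factorial : ℤ) * (∑ j ∈ range n, ((j:ℤ)+1)^(e+1))
        = ((e+1).factorial : ℤ) * (((n:ℤ)+1)^(e+1+1) - ((n:ℤ)+1))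
          - ∑ k ∈ range e, ((e+1).factorial : ℤ) * (((e+1+1).choose (k+1) : ℤ) * (∑ j ∈ range n, ((j:ℤ)+1)^(k+1))) := by
      rw [← Finset.mul_sum, Nat.factorial_succ (e+1)]
      push_cast
      nlinarith [hid]
    rw [key]
    apply dvd_sub
    · apply Dvd.dvd.mul_left
      have h1 : (n:ℤ) ∣ ((n:ℤ)+1)^(e+1) - 1 := by
        simpa using sub_dvd_pow_sub_pow ((n:ℤ)+1) 1 (e+1)
      have h2 : ((n:ℤ)+1)^(e+1+1) - ((n:ℤ)+1) = ((n:ℤ)+1) * (((n:ℤ)+1)^(e+1) - 1) := by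
        ring
      rw [h2, mul_comm (n:ℤ) ((n:ℤ)+1)]
      exact mul_dvd_mul_left _ h1
    · apply Finset.dvd_sum
      intro k hk
      simp only [Finset.mem_range] at hk
      have hk2 : k + 2 ≤ e + 1 := by omega
      obtain ⟨q, hq⟩ := Nat.factorial_dvd_factorial hk2
      have hq' : (e+1).factorial = (k+1+1).factorial * q := hq
      have ihk := ih (k+1) (by omega) (by omega)
      rw [hq']
      have heq : (((k+1+1).factorial * q : ℕ) : ℤ) * (((e+1+1).choose (k+1) : ℤ) * (∑ j ∈ range n, ((j:ℤ)+1)^(k+1)))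
          = (((k+1+1).factorial : ℤ) * (∑ j ∈ range n, ((j:ℤ)+1)^(k+1))) * ((q : ℤ) * ((e+1+1).choose (k+1) : ℤ)) := by
        push_cast
        ring
      rw [heq]
      exact ihk.mul_right _

theorem stmt9 (n d : ℕ) (hd : 1 ≤ d) :
    n * (n + 1) ∣ Nat.factorial (d + 1) * ∑ j ∈ Finset.Icc 1 n, j ^ d := by
  rw [← Int.natCast_dvd_natCast]
  push_cast
  have hIcc : ∑ j ∈ Finset.Icc 1 n, (j:ℤ)^d = ∑ j ∈ Finset.range n, ((j:ℤ)+1)^d := by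
    rw [← Finset.Ico_add_one_right_eq_Icc, Finset.sum_Ico_eq_sum_range]
    simp [add_comm]
  rw [hIcc]
  exact main_int n d hd
end

section
/- For a permutation σ = (h_1,...,h_d) of (1,...,d) whose associated Euler fishbone contains exactly v strict inequality signs (i.e., σ has v positions i with h_i > h_{i+1}), the set of tuples (X_1,...,X_d) ∈ {1,...,n}^d satisfying the fishbone has cardinality C(n-v+d-1, d) (the tetrahedral number T_{n-v}^d), for all n ≥ 1. -/
/-!
Put `Y = X ∘ σ`. The fishbone becomes a chain `Y 0 R₀ Y 1 R₁ ⋯ Y (d-1)` whose sign `Rⱼ` is weak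
exactly at the ascents `σ j < σ (j+1)`, of which there are `d - 1 - v`. Adding to `Y k` the number
of weak signs to the right of position `k` makes every sign strict, and this is a bijection onto
the strictly decreasing maps `Fin d → Fin (n + d - 1 - v)`, i.e. onto the `d`-subsets of a set
with `n - v + d - 1` elements (if `v ≥ n`, both counts are zero).
-/

open Finset

namespace Fishbone

theorem card_strictAnti (k M : ℕ) :
    Nat.card {W : Fin k → Fin M // StrictAnti W} = M.choose k := by
  let e : {W : Fin k → Fin M // StrictAnti W} ≃ (Fin k ↪o (Fin M)ᵒᵈ) :=
    { toFun W := OrderEmbedding.ofStrictMono (OrderDual.toDual ∘ W.1) W.2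
      invFun f := ⟨OrderDual.ofDual ∘ f, f.strictMono⟩
      left_inv _ := rfl
      right_inv _ := rfl }
  rw [Nat.card_congr (e.trans Set.powersetCard.ofFinEmbEquiv), Set.powersetCard.card]
  simp

variable {m : ℕ}

section Chain

variable (weak : Fin m → Prop) [DecidablePred weak]

def IsFishboneChain {α : Type*} [Preorder α] (Y : Fin (m + 1) → α) : Prop :=
  ∀ j : Fin m, if weak j then Y j.succ ≤ Y j.castSucc else Y j.succ < Y j.castSucc

def weakCount (k : Fin (m + 1)) : ℕ := #{j : Fin m | k ≤ j.castSucc ∧ weak j}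

theorem weakCount_castSucc (j : Fin m) :
    weakCount weak j.castSucc = weakCount weak j.succ + if weak j then 1 else 0 := by
  simp only [weakCount, Fin.castSucc_le_castSucc_iff, Fin.succ_le_castSucc_iff]
  rw [← filter_filter, ← filter_filter, filter_le_eq_Ici, filter_lt_eq_Ioi, ← Ioi_insert,
    filter_insert]
  split_ifs with hj
  · rw [card_insert_of_notMem (by simp)]
  · rfl

theorem weakCount_antitone : Antitone (weakCount weak) :=
  Fin.antitone_iff_succ_le.2 fun j => by rw [weakCount_castSucc]; exact Nat.le_add_right _ _

theorem weakCount_last : weakCount weak (Fin.last m) = 0 := by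
  simp [weakCount]

theorem antitone_sub_weakCount {M : ℕ} {W : Fin (m + 1) → Fin M} (hW : StrictAnti W) :
    Antitone fun k => ((W k : ℕ) : ℤ) - weakCount weak k :=
  Fin.antitone_iff_succ_le.2 fun j => by
    have hstep : (W j.succ : ℕ) < W j.castSucc := hW (Fin.castSucc_lt_succ (i := j))
    have hcount := weakCount_castSucc weak j
    split_ifs at hcount <;> omega

theorem weakCount_le_of_strictAnti {M : ℕ} {W : Fin (m + 1) → Fin M} (hW : StrictAnti W)
    (k : Fin (m + 1)) : weakCount weak k ≤ W k := by
  have := antitone_sub_weakCount weak hW (Fin.le_last k)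
  simp only [weakCount_last] at this
  omega

def chainShiftEquiv (n : ℕ) :
    {Y : Fin (m + 1) → Fin n // IsFishboneChain weak Y} ≃
      {W : Fin (m + 1) → Fin (n + weakCount weak 0) // StrictAnti W} where
  toFun Y := ⟨fun k => ⟨Y.1 k + weakCount weak k, by
      have := weakCount_antitone weak (Fin.zero_le k); omega⟩,
    Fin.strictAnti_iff_succ_lt.2 fun j => by
      have hY := Y.2 j
      have hcount := weakCount_castSucc weak j
      simp only [Fin.lt_def, Fin.le_def] at hY ⊢
      split_ifs at hY hcount <;> omega⟩
  invFun W := ⟨fun k => ⟨W.1 k - weakCount weak k, by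
      have hk := antitone_sub_weakCount weak W.2 (Fin.zero_le k)
      have := (W.1 0).isLt
      have := weakCount_le_of_strictAnti weak W.2 k
      simp only at hk
      omega⟩,
    fun j => by
      have hW : (W.1 j.succ : ℕ) < W.1 j.castSucc := W.2 (Fin.castSucc_lt_succ (i := j))
      have hsucc := weakCount_le_of_strictAnti weak W.2 j.succ
      have hcount := weakCount_castSucc weak j
      simp only [Fin.lt_def, Fin.le_def]
      split_ifs at hcount ⊢ <;> omega⟩
  left_inv Y := by ext k; simp
  right_inv W := by
    ext k
    have := weakCount_le_of_strictAnti weak W.2 k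
    simp only
    omega

theorem card_isFishboneChain (n : ℕ) :
    Nat.card {Y : Fin (m + 1) → Fin n // IsFishboneChain weak Y} =
      (n + weakCount weak 0).choose (m + 1) := by
  rw [Nat.card_congr (chainShiftEquiv weak n), card_strictAnti]

end Chain

theorem forall_adjacent_iff (R : Fin (m + 1) → Fin (m + 1) → Prop) :
    (∀ (i : Fin (m + 1)) (hi : (i : ℕ) + 1 < m + 1), R i ⟨i + 1, hi⟩) ↔
      ∀ j : Fin m, R j.castSucc j.succ :=
  ⟨fun h j => h j.castSucc (by simp), fun h i hi => h ⟨i, by omega⟩⟩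

theorem card_adjacent (R : Fin (m + 1) → Fin (m + 1) → Prop) [DecidableRel R] :
    Nat.card {i : Fin (m + 1) // ∃ hi : (i : ℕ) + 1 < m + 1, R i ⟨i + 1, hi⟩} =
      #{j : Fin m | R j.castSucc j.succ} := by
  rw [← Fintype.card_coe, ← Nat.card_eq_fintype_card]
  refine Nat.card_congr
    { toFun i := ⟨⟨i.1, by obtain ⟨hi, -⟩ := i.2; omega⟩, by
        obtain ⟨hi, hR⟩ := i.2; exact mem_filter.2 ⟨mem_univ _, hR⟩⟩
      invFun j := ⟨j.1.castSucc, by simp, (mem_filter.1 j.2).2⟩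
      left_inv _ := rfl
      right_inv _ := rfl }

theorem card_fishbone (σ : Equiv.Perm (Fin (m + 1))) (n : ℕ) :
    Nat.card {X : Fin (m + 1) → Fin n // ∀ (i : Fin (m + 1)) (hi : (i : ℕ) + 1 < m + 1),
        if σ i < σ ⟨(i : ℕ) + 1, hi⟩ then X (σ ⟨(i : ℕ) + 1, hi⟩) ≤ X (σ i)
        else X (σ ⟨(i : ℕ) + 1, hi⟩) < X (σ i)} =
      (n + #{j : Fin m | σ j.castSucc < σ j.succ}).choose (m + 1) := by
  refine (Nat.card_congr ((Equiv.arrowCongr σ.symm (.refl (Fin n))).subtypeEquiv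
    (q := IsFishboneChain fun j => σ j.castSucc < σ j.succ) fun X => forall_adjacent_iff
      fun a b => if σ a < σ b then X (σ b) ≤ X (σ a) else X (σ b) < X (σ a))).trans ?_
  rw [card_isFishboneChain]
  simp [weakCount]

theorem card_descents_add_card_ascents (σ : Equiv.Perm (Fin (m + 1))) :
    Nat.card {i : Fin (m + 1) // ∃ hi : (i : ℕ) + 1 < m + 1, σ ⟨(i : ℕ) + 1, hi⟩ < σ i} +
      #{j : Fin m | σ j.castSucc < σ j.succ} = m := by
  have hdesc : ∀ j : Fin m, σ j.succ < σ j.castSucc ↔ ¬ σ j.castSucc < σ j.succ := fun j =>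
    ⟨lt_asymm, fun h => (not_lt.1 h).lt_of_ne (σ.injective.ne Fin.castSucc_lt_succ.ne')⟩
  rw [card_adjacent fun a b => σ b < σ a]
  simp only [hdesc]
  rw [add_comm, card_filter_add_card_filter_not, card_univ, Fintype.card_fin]

end Fishbone

theorem stmt11_general (n d : ℕ) (hd : 1 ≤ d) (σ : Equiv.Perm (Fin d)) (v : ℕ)
    (hv : v = Nat.card {i : Fin d // ∃ hi : (i : ℕ) + 1 < d, σ ⟨(i : ℕ) + 1, hi⟩ < σ i}) :
    Nat.card {X : Fin d → Fin n //
        ∀ (i : Fin d) (hi : (i : ℕ) + 1 < d),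
          if σ i < σ ⟨(i : ℕ) + 1, hi⟩ then X (σ ⟨(i : ℕ) + 1, hi⟩) ≤ X (σ i)
          else X (σ ⟨(i : ℕ) + 1, hi⟩) < X (σ i)} =
      Nat.choose (n - v + d - 1) d := by
  obtain ⟨m, rfl⟩ : ∃ m, d = m + 1 := ⟨d - 1, by omega⟩
  have hcount := Fishbone.card_descents_add_card_ascents σ
  rw [← hv] at hcount
  rw [Fishbone.card_fishbone]
  rcases le_or_gt v n with hvn | hnv
  · congr 1
    omega
  · rw [Nat.choose_eq_zero_of_lt (by omega), Nat.choose_eq_zero_of_lt (by omega)]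

/-- The fishbone set of a permutation `σ` with `v` strict signs (descents of the
sequence `σ 0, σ 1, ...`) has cardinality `C(n - v + d - 1, d)`.  Entries of the
tuples range over `Fin n`, representing `{1,...,n}`. -/
theorem stmt11 (n d : ℕ) (hn : 1 ≤ n) (hd : 1 ≤ d) (σ : Equiv.Perm (Fin d)) (v : ℕ)
    (hv : v = Nat.card {i : Fin d // ∃ hi : (i : ℕ) + 1 < d, σ ⟨(i : ℕ) + 1, hi⟩ < σ i}) :
    Nat.card {X : Fin d → Fin n //
        ∀ (i : Fin d) (hi : (i : ℕ) + 1 < d),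
          if σ i < σ ⟨(i : ℕ) + 1, hi⟩ then X (σ ⟨(i : ℕ) + 1, hi⟩) ≤ X (σ i)
          else X (σ ⟨(i : ℕ) + 1, hi⟩) < X (σ i)} =
      Nat.choose (n - v + d - 1) d :=
  stmt11_general n d hd σ v hv
end

section
/- The volume of the slab of the unit d-cube between the hyperplanes ∑ x_j = s-1 and ∑ x_j = s equals A(d, s-1)/d!, for integers 1 ≤ s ≤ d: vol({x ∈ [0,1]^d : s-1 ≤ ∑_{j=1}^d x_j ≤ s}) = A(d,s-1)/d!. -/
open MeasureTheory

/-!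
Let `G_d(s)` be the volume of the part of `[0,1]^d` where `∑ x_j < s`. Fubini over the first
coordinate gives `G_{d+1}(s) = ∫_{s-1}^{s} G_d`; this window integral commutes with finite
differences and sends `x₊^d` to `Δ x₊^{d+1} / (d+1)`, so by induction
`G_d(s) = Δ^d x₊^d (s - d) / d!`. The slab `s - 1 ≤ ∑ x_j ≤ s` differs from the difference of
the two regions by a null hyperplane, so its volume is `Δ^{d+1} x₊^d (s - 1 - d) / d!`. Finally
`k ↦ Δ^{d+1} x₊^d (k - d)` obeys the Eulerian recurrence, because `x₊^{d+1} = x · x₊^d` and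
differences satisfy the Leibniz rule `Δ^{n+1} (x f) = x Δ^{n+1} f + (n+1) Δ^n f (· + 1)`.
-/

open Set fwdDiff Topology

/-- Strict positivity makes `truncPow 0` the indicator of `(0, ∞)`, matching the strict
inequality in `cubeBelow`. -/
noncomputable def truncPow (n : ℕ) (x : ℝ) : ℝ := if 0 < x then x ^ n else 0

lemma truncPow_of_pos {n : ℕ} {x : ℝ} (hx : 0 < x) : truncPow n x = x ^ n := if_pos hx

lemma truncPow_of_nonpos {n : ℕ} {x : ℝ} (hx : x ≤ 0) : truncPow n x = 0 := if_neg hx.not_gt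

lemma truncPow_nonneg (n : ℕ) (x : ℝ) : 0 ≤ truncPow n x := by
  unfold truncPow; split_ifs with hx
  exacts [pow_nonneg hx.le n, le_rfl]

lemma truncPow_succ (n : ℕ) (x : ℝ) : truncPow (n + 1) x = x * truncPow n x := by
  unfold truncPow; split_ifs <;> ring

lemma monotone_truncPow (n : ℕ) : Monotone (truncPow n) := by
  intro x y hxy
  rcases le_or_gt x 0 with hx | hx
  · rw [truncPow_of_nonpos hx]; exact truncPow_nonneg n y
  · rw [truncPow_of_pos hx, truncPow_of_pos (hx.trans_le hxy)]
    exact pow_le_pow_left₀ hx.le hxy n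

lemma intervalIntegrable_truncPow (n : ℕ) (a b : ℝ) :
    IntervalIntegrable (truncPow n) volume a b :=
  (monotone_truncPow n).intervalIntegrable

lemma truncPow_succ_eq_max_pow (n : ℕ) : truncPow (n + 1) = fun x ↦ max x 0 ^ (n + 1) := by
  ext x
  rcases le_or_gt x 0 with hx | hx
  · rw [truncPow_of_nonpos hx, max_eq_right hx, zero_pow n.succ_ne_zero]
  · rw [truncPow_of_pos hx, max_eq_left hx.le]

lemma continuous_truncPow_succ (n : ℕ) : Continuous (truncPow (n + 1)) := by
  rw [truncPow_succ_eq_max_pow]; fun_prop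

lemma hasDerivAt_truncPow_succ (n : ℕ) {x : ℝ} (hx : x ≠ 0) :
    HasDerivAt (truncPow (n + 1)) ((n + 1) * truncPow n x) x := by
  rcases hx.lt_or_gt with hx | hx
  · have h : truncPow (n + 1) =ᶠ[𝓝 x] fun _ ↦ 0 :=
      (eventually_lt_nhds hx).mono fun y hy ↦ truncPow_of_nonpos hy.le
    rw [truncPow_of_nonpos hx.le, mul_zero]
    exact (hasDerivAt_const x 0).congr_of_eventuallyEq h
  · have h : truncPow (n + 1) =ᶠ[nhds x] fun y ↦ y ^ (n + 1) :=
      (eventually_gt_nhds hx).mono fun y hy ↦ truncPow_of_pos hy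
    rw [truncPow_of_pos hx]
    simpa using (hasDerivAt_pow (n + 1) x).congr_of_eventuallyEq h

lemma integral_truncPow (n : ℕ) (a b : ℝ) :
    ∫ u in a..b, truncPow n u = (truncPow (n + 1) b - truncPow (n + 1) a) / (n + 1) := by
  have h := integral_eq_of_hasDerivAt_off_countable (a := a) (b := b) _ _ (countable_singleton 0)
    (continuous_truncPow_succ n).continuousOn
    (fun x hx ↦ hasDerivAt_truncPow_succ n hx.2)
    ((intervalIntegrable_truncPow n a b).const_mul (n + 1 : ℝ))
  rw [intervalIntegral.integral_const_mul] at h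
  rw [← h]; field_simp

section FiniteDifferences

lemma fwdDiff_iter_eq_zero_of_forall {M G : Type*} [AddCommMonoid M] [AddCommGroup G]
    (h : M) {f : M → G} {n : ℕ} {y : M} (hf : ∀ k ≤ n, f (y + k • h) = 0) :
    Δ_[h] ^[n] f y = 0 := by
  rw [fwdDiff_iter_eq_sum_shift]
  exact Finset.sum_eq_zero fun k hk ↦ by
    rw [hf k (Nat.lt_succ_iff.mp (Finset.mem_range.mp hk)), smul_zero]

lemma fwdDiff_iter_succ_id_mul {R : Type*} [CommRing R] (h : R) (f : R → R) (n : ℕ) (y : R) :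
    Δ_[h] ^[n + 1] (fun x ↦ x * f x) y
      = y * Δ_[h] ^[n + 1] f y + (n + 1) * h * Δ_[h] ^[n] f (y + h) := by
  induction n generalizing y with
  | zero =>
    simp only [zero_add, Function.iterate_one, Function.iterate_zero, id, fwdDiff]
    push_cast; ring
  | succ n ih =>
    rw [Function.iterate_succ_apply', fwdDiff, ih, ih, Function.iterate_succ_apply' _ (n + 1),
      fwdDiff, Function.iterate_succ_apply' _ n, fwdDiff]
    push_cast; ring

variable {E : Type*} [NormedAddCommGroup E]

lemma intervalIntegrable_fwdDiff_iter {f : ℝ → E} (hf : ∀ a b, IntervalIntegrable f volume a b)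
    (h : ℝ) (n : ℕ) (a b : ℝ) : IntervalIntegrable (Δ_[h] ^[n] f) volume a b := by
  induction n generalizing a b with
  | zero => exact hf a b
  | succ n ih =>
    rw [Function.iterate_succ']
    have hshift := (ih (a + h) (b + h)).comp_add_right h
    simp only [add_sub_cancel_right] at hshift
    exact hshift.sub (ih a b)

lemma integral_fwdDiff [NormedSpace ℝ E] {f : ℝ → E}
    (hf : ∀ a b, IntervalIntegrable f volume a b) (h ℓ y : ℝ) :
    ∫ u in y..y + ℓ, Δ_[h] f u = Δ_[h] (fun y ↦ ∫ u in y..y + ℓ, f u) y := by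
  have hshift : IntervalIntegrable (fun u ↦ f (u + h)) volume y (y + ℓ) := by
    simpa using (hf (y + h) (y + ℓ + h)).comp_add_right h
  simp only [fwdDiff]
  rw [intervalIntegral.integral_sub hshift (hf _ _), intervalIntegral.integral_comp_add_right,
    add_right_comm]

lemma integral_fwdDiff_iter [NormedSpace ℝ E] {f : ℝ → E}
    (hf : ∀ a b, IntervalIntegrable f volume a b) (h ℓ : ℝ) (n : ℕ) (y : ℝ) :
    ∫ u in y..y + ℓ, Δ_[h] ^[n] f u = Δ_[h] ^[n] (fun y ↦ ∫ u in y..y + ℓ, f u) y := by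
  induction n generalizing f with
  | zero => rfl
  | succ n ih =>
    rw [Function.iterate_succ_apply, ih (f := Δ_[h] f) (intervalIntegrable_fwdDiff_iter hf h 1),
      funext (integral_fwdDiff hf h ℓ), Function.iterate_succ_apply]

end FiniteDifferences

/-- Expanded by `fwdDiff_iter_eq_sum_shift`, this is the classical
`∑_{j ≤ d} (-1)^j (d choose j) (s - j)₊^d / d!`. -/
noncomputable def irwinHallCDF (d : ℕ) (s : ℝ) : ℝ := Δ_[1] ^[d] (truncPow d) (s - d) / d.factorial

lemma intervalIntegrable_irwinHallCDF (d : ℕ) (a b : ℝ) :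
    IntervalIntegrable (irwinHallCDF d) volume a b := by
  have h := (intervalIntegrable_fwdDiff_iter (intervalIntegrable_truncPow d) 1 d
    (a - d) (b - d)).comp_sub_right (d : ℝ)
  simp only [sub_add_cancel] at h
  exact h.div_const _

lemma integral_irwinHallCDF (d : ℕ) (s : ℝ) :
    ∫ u in (s - 1)..s, irwinHallCDF d u = irwinHallCDF (d + 1) s := by
  have hwindow : (fun y ↦ ∫ u in y..y + 1, truncPow d u)
      = ((d : ℝ) + 1)⁻¹ • Δ_[1] (truncPow (d + 1)) := by
    funext y
    rw [integral_truncPow, Pi.smul_apply, fwdDiff, smul_eq_mul, div_eq_inv_mul]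
  unfold irwinHallCDF
  rw [intervalIntegral.integral_div, intervalIntegral.integral_comp_sub_right,
    show s - d = s - 1 - d + 1 by ring, integral_fwdDiff_iter (intervalIntegrable_truncPow d),
    hwindow, fwdDiff_iter_const_smul, Pi.smul_apply, ← Function.iterate_succ_apply,
    Nat.factorial_succ, smul_eq_mul]
  push_cast
  rw [show s - 1 - d = s - (d + 1) by ring]
  field_simp

lemma irwinHallCDF_nonneg (d : ℕ) (s : ℝ) : 0 ≤ irwinHallCDF d s := by
  induction d generalizing s with
  | zero => simpa [irwinHallCDF] using truncPow_nonneg 0 s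
  | succ d ih =>
    rw [← integral_irwinHallCDF]
    exact intervalIntegral.integral_nonneg (by linarith) fun u _ ↦ ih u

lemma eulerian_eq_zero_of_lt : ∀ {d k : ℕ}, d < k → eulerian d k = 0
  | 0, _ + 1, _ => rfl
  | d + 1, k + 1, h => by
    rw [eulerian, eulerian_eq_zero_of_lt (by omega : d < k + 1),
      eulerian_eq_zero_of_lt (by omega : d < k)]
    ring

lemma cast_eulerian_succ_succ (d k : ℕ) :
    (eulerian (d + 1) (k + 1) : ℝ) = (k + 2) * eulerian d (k + 1) + (d - k) * eulerian d k := by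
  rw [eulerian]
  rcases le_or_gt k d with h | h
  · rw [Nat.add_sub_add_right]; push_cast [Nat.cast_sub h]; ring
  · rw [eulerian_eq_zero_of_lt h, eulerian_eq_zero_of_lt (h.trans k.lt_succ_self)]; simp

lemma fwdDiff_iter_truncPow_succ (d : ℕ) (y : ℝ) :
    Δ_[1] ^[d + 2] (truncPow (d + 1)) y
      = (y + d + 2) * Δ_[1] ^[d + 1] (truncPow d) (y + 1) - y * Δ_[1] ^[d + 1] (truncPow d) y := by
  rw [show truncPow (d + 1) = fun x ↦ x * truncPow d x from funext (truncPow_succ d),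
    fwdDiff_iter_succ_id_mul, Function.iterate_succ_apply' _ (d + 1), fwdDiff]
  push_cast; ring

lemma eulerian_eq_fwdDiff_iter_truncPow (d k : ℕ) :
    (eulerian d k : ℝ) = Δ_[1] ^[d + 1] (truncPow d) (k - d) := by
  induction d generalizing k with
  | zero =>
    rcases k with _ | k
    · simp [eulerian, fwdDiff, truncPow]
    · simp only [eulerian, Nat.cast_zero, sub_zero, zero_add, Function.iterate_one, fwdDiff,
        truncPow_of_pos (by positivity : (0 : ℝ) < (k + 1 : ℕ)),
        truncPow_of_pos (by positivity : (0 : ℝ) < (k + 1 : ℕ) + 1), pow_zero, sub_self]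
  | succ d ih =>
    cases k with
    | zero =>
      have hvanish : Δ_[1] ^[d + 1] (truncPow d) (-(d + 1)) = 0 :=
        fwdDiff_iter_eq_zero_of_forall _ fun k hk ↦ truncPow_of_nonpos (by
          have : (k : ℝ) ≤ d + 1 := by exact_mod_cast hk
          simp only [nsmul_eq_mul, mul_one]; linarith)
      rw [eulerian, ih 0, fwdDiff_iter_truncPow_succ]
      push_cast
      rw [show (0 : ℝ) - (d + 1) = -(d + 1) by ring, hvanish]
      ring_nf
    | succ k =>
      rw [cast_eulerian_succ_succ, ih, ih, fwdDiff_iter_truncPow_succ]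
      push_cast
      ring_nf

lemma irwinHallCDF_succ_sub (d k : ℕ) :
    irwinHallCDF d (k + 1) - irwinHallCDF d k = eulerian d k / d.factorial := by
  rw [eulerian_eq_fwdDiff_iter_truncPow, Function.iterate_succ_apply', fwdDiff, irwinHallCDF,
    irwinHallCDF, sub_div, show (k : ℝ) + 1 - d = k - d + 1 by ring]

def cubeBelow (d : ℕ) (s : ℝ) : Set (Fin d → ℝ) := {x | (∀ j, x j ∈ Icc 0 1) ∧ ∑ j, x j < s}

lemma measurableSet_cubeBelow (d : ℕ) (s : ℝ) : MeasurableSet (cubeBelow d s) := by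
  unfold cubeBelow; measurability

lemma volume_cubeBelow_succ (d : ℕ) (s : ℝ) :
    volume (cubeBelow (d + 1) s) = ∫⁻ t in Icc 0 1, volume (cubeBelow d (s - t)) := by
  set E : Set (ℝ × (Fin d → ℝ)) := {p | p.1 ∈ Icc 0 1 ∧ p.2 ∈ cubeBelow d (s - p.1)}
  have hE : MeasurableSet E := by
    simp only [E, cubeBelow]; measurability
  have hpre : cubeBelow (d + 1) s = MeasurableEquiv.piFinSuccAbove (fun _ ↦ ℝ) 0 ⁻¹' E := by
    ext x
    simp [cubeBelow, E, Fin.forall_fin_succ, Fin.sum_univ_succ, Fin.tail, lt_sub_iff_add_lt',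
      and_assoc]
  rw [hpre, (volume_preserving_piFinSuccAbove (fun _ ↦ ℝ) 0).measure_preimage hE.nullMeasurableSet,
    Measure.volume_eq_prod, Measure.prod_apply hE, ← lintegral_indicator measurableSet_Icc]
  congr 1
  funext t
  by_cases ht : t ∈ Icc (0 : ℝ) 1
  · rw [indicator_of_mem ht]; congr 1; ext y; simp [E, ht.1, ht.2]
  · rw [indicator_of_notMem ht,
      show Prod.mk t ⁻¹' E = ∅ from eq_empty_of_forall_notMem fun _ hy ↦ ht hy.1, measure_empty]

lemma volume_cubeBelow (d : ℕ) (s : ℝ) :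
    volume (cubeBelow d s) = ENNReal.ofReal (irwinHallCDF d s) := by
  induction d generalizing s with
  | zero => by_cases hs : 0 < s <;> simp [cubeBelow, irwinHallCDF, truncPow, hs, volume_pi]
  | succ d ih =>
    have hint : IntegrableOn (fun t ↦ irwinHallCDF d (s - t)) (Icc 0 1) := by
      rw [← intervalIntegrable_iff_integrableOn_Icc_of_le zero_le_one]
      simpa using ((intervalIntegrable_irwinHallCDF d (s - 1) s).comp_sub_left s).symm
    rw [volume_cubeBelow_succ, ← integral_irwinHallCDF]
    simp_rw [ih]
    rw [← ofReal_integral_eq_lintegral_ofReal hint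
        (ae_of_all _ fun t ↦ irwinHallCDF_nonneg d (s - t)),
      integral_Icc_eq_integral_Ioc, ← intervalIntegral.integral_of_le zero_le_one,
      intervalIntegral.integral_comp_sub_left, sub_zero]

lemma volume_setOf_sum_eq {d : ℕ} (hd : d ≠ 0) (c : ℝ) :
    volume {x : Fin d → ℝ | ∑ j, x j = c} = 0 := by
  let f : (Fin d → ℝ) →ₗ[ℝ] ℝ := ∑ j, LinearMap.proj j
  have hf : ∀ x, f x = ∑ j, x j := fun x ↦ by simp [f]
  have hker : LinearMap.ker f ≠ ⊤ := fun h ↦ by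
    have h1 := hf fun _ ↦ 1
    simp [LinearMap.ker_eq_top.mp h] at h1
    exact hd (by exact_mod_cast h1.symm)
  have hset : {x : Fin d → ℝ | ∑ j, x j = c} = (· + -fun _ ↦ c / d) ⁻¹' (LinearMap.ker f) := by
    ext x
    simp [hf, Finset.sum_add_distrib, add_neg_eq_zero]
    field_simp
  rw [hset, measure_preimage_add_right, Measure.addHaar_submodule _ _ hker]

lemma volume_cube_slab {d : ℕ} (hd : d ≠ 0) {a b : ℝ} (hab : a ≤ b) :
    volume {x : Fin d → ℝ | (∀ j, x j ∈ Icc 0 1) ∧ a ≤ ∑ j, x j ∧ ∑ j, x j ≤ b}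
      = volume (cubeBelow d b) - volume (cubeBelow d a) := by
  set S := {x : Fin d → ℝ | (∀ j, x j ∈ Icc 0 1) ∧ a ≤ ∑ j, x j ∧ ∑ j, x j ≤ b}
  have hsub : cubeBelow d a ⊆ cubeBelow d b := fun x hx ↦ ⟨hx.1, hx.2.trans_le hab⟩
  have hS : S ⊆ (cubeBelow d b \ cubeBelow d a) ∪ {x : Fin d → ℝ | ∑ j, x j = b} := by
    rintro x ⟨hx, hax, hxb⟩
    rcases hxb.lt_or_eq with hxb | hxb
    · exact Or.inl ⟨⟨hx, hxb⟩, fun h ↦ h.2.not_ge hax⟩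
    · exact Or.inr hxb
  have hdiff : cubeBelow d b \ cubeBelow d a ⊆ S :=
    fun x hx ↦ ⟨hx.1.1, not_lt.mp fun h ↦ hx.2 ⟨hx.1.1, h⟩, hx.1.2.le⟩
  have hnull : volume {x : Fin d → ℝ | ∑ j, x j = b} = 0 := volume_setOf_sum_eq hd b
  calc volume S = volume (cubeBelow d b \ cubeBelow d a) :=
        le_antisymm ((measure_mono hS).trans <| (measure_union_le _ _).trans_eq <| by
          rw [hnull, add_zero]) (measure_mono hdiff)
    _ = volume (cubeBelow d b) - volume (cubeBelow d a) :=
        measure_sdiff hsub (measurableSet_cubeBelow d a).nullMeasurableSet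
          (by rw [volume_cubeBelow]; exact ENNReal.ofReal_ne_top)

/-- The volume of the slab of the unit cube between the hyperplanes
`∑ x_j = s - 1` and `∑ x_j = s` is `A(d, s-1)/d!`. -/
theorem stmt18 (d s : ℕ) (hs : 1 ≤ s) (hsd : s ≤ d) :
    volume {x : Fin d → ℝ |
        (∀ j, x j ∈ Set.Icc (0 : ℝ) 1) ∧
        (s : ℝ) - 1 ≤ ∑ j, x j ∧ ∑ j, x j ≤ (s : ℝ)} =
      ENNReal.ofReal ((eulerian d (s - 1) : ℝ) / (Nat.factorial d : ℝ)) := by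
  obtain ⟨k, rfl⟩ : ∃ k, s = k + 1 := ⟨s - 1, by omega⟩
  push_cast
  rw [volume_cube_slab (by omega) (by linarith), volume_cubeBelow, volume_cubeBelow,
    ← ENNReal.ofReal_sub _ (irwinHallCDF_nonneg d _), add_sub_cancel_right, irwinHallCDF_succ_sub]
end
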